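/- arXiv:2409.19729 — 6 statements merged into one kernel-verified Lean document; each statement's English description precedes it below -/
import Mathlib

section
/- Theorem 1 (Hellinger part): the squared Hellinger distance between the base and alternative posteriors satisfies H(p‖p⋆)² = 1 − [∫ p(θ) √(π⋆(θ)/π(θ)) dμ(θ)] / √(∫ p(θ) (π⋆(θ)/π(θ)) dμ(θ)); that is, it equals one minus the base-posterior expectation of √(π⋆/π) divided by the square root of the base-posterior expectation of π⋆/π. -/
open MeasureTheory

/-- Theorem 1 (Hellinger part): the squared Hellinger distance between the base and
alternative posteriors equals one minus the base-posterior expectation of √(π⋆/π)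
divided by the square root of the base-posterior expectation of π⋆/π. -/
theorem sq_hellinger_dist_posteriors
    {Θ : Type*} [MeasurableSpace Θ] (μ : Measure Θ) [SigmaFinite μ]
    (f pr prs : Θ → ℝ)
    (hf : Measurable f) (hpr : Measurable pr) (hprs : Measurable prs)
    (hf0 : ∀ θ, 0 ≤ f θ) (hpr0 : ∀ θ, 0 ≤ pr θ) (hprs0 : ∀ θ, 0 ≤ prs θ)
    (m ms : ℝ)
    (hm_def : m = ∫ θ, pr θ * f θ ∂μ)
    (hms_def : ms = ∫ θ, prs θ * f θ ∂μ)
    (hm_int : Integrable (fun θ => pr θ * f θ) μ)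
    (hms_int : Integrable (fun θ => prs θ * f θ) μ)
    (hm_pos : 0 < m) (hms_pos : 0 < ms)
    (hpos : ∀ᵐ θ ∂μ, 0 < f θ → 0 < pr θ)
    (p ps : Θ → ℝ)
    (hp_def : ∀ θ, p θ = pr θ * f θ / m)
    (hps_def : ∀ θ, ps θ = prs θ * f θ / ms) :
    (1 / 2) * ∫ θ, (Real.sqrt (p θ) - Real.sqrt (ps θ)) ^ 2 ∂μ
      = 1 - (∫ θ, p θ * Real.sqrt (prs θ / pr θ) ∂μ)
            / Real.sqrt (∫ θ, p θ * (prs θ / pr θ) ∂μ) := by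
  have hpfun : p = fun θ => pr θ * f θ / m := funext hp_def
  have hpsfun : ps = fun θ => prs θ * f θ / ms := funext hps_def
  have hp0 : ∀ θ, 0 ≤ p θ := fun θ => by
    rw [hp_def]; exact div_nonneg (mul_nonneg (hpr0 θ) (hf0 θ)) hm_pos.le
  have hps0 : ∀ θ, 0 ≤ ps θ := fun θ => by
    rw [hps_def]; exact div_nonneg (mul_nonneg (hprs0 θ) (hf0 θ)) hms_pos.le
  have hp_int : Integrable p μ := by rw [hpfun]; exact hm_int.div_const m
  have hps_int : Integrable ps μ := by rw [hpsfun]; exact hms_int.div_const ms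
  -- the cross term
  set g : Θ → ℝ := fun θ => Real.sqrt (p θ) * Real.sqrt (ps θ) with hg
  have hp_meas : Measurable p := by rw [hpfun]; exact (hpr.mul hf).div_const m
  have hps_meas : Measurable ps := by rw [hpsfun]; exact (hprs.mul hf).div_const ms
  have hg_meas : AEStronglyMeasurable g μ :=
    (hp_meas.sqrt.mul hps_meas.sqrt).aestronglyMeasurable
  have hg_le : ∀ θ, g θ ≤ (p θ + ps θ) / 2 := fun θ => by
    have h1 := sq_nonneg (Real.sqrt (p θ) - Real.sqrt (ps θ))
    have h2 := Real.sq_sqrt (hp0 θ)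
    have h3 := Real.sq_sqrt (hps0 θ)
    simp only [hg]; nlinarith
  have hg_int : Integrable g μ := by
    refine Integrable.mono' ((hp_int.add hps_int).div_const 2) hg_meas ?_
    filter_upwards with θ
    have h0 : 0 ≤ g θ := mul_nonneg (Real.sqrt_nonneg _) (Real.sqrt_nonneg _)
    rw [Real.norm_of_nonneg h0]
    simpa using hg_le θ
  have hintp : ∫ θ, p θ ∂μ = 1 := by
    rw [hpfun, integral_div, ← hm_def, div_self hm_pos.ne']
  have hintps : ∫ θ, ps θ ∂μ = 1 := by
    rw [hpsfun, integral_div, ← hms_def, div_self hms_pos.ne']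
  -- second moment
  have hmom : ∫ θ, p θ * (prs θ / pr θ) ∂μ = ms / m := by
    have hae : (fun θ => p θ * (prs θ / pr θ)) =ᵐ[μ] fun θ => prs θ * f θ / ms * (ms / m) := by
      filter_upwards [hpos] with θ hθ
      rcases eq_or_lt_of_le (hf0 θ) with hfe | hfp
      · simp [hp_def, ← hfe]
      · have hprp := hθ hfp
        rw [hp_def]
        field_simp
    rw [integral_congr_ae hae, integral_mul_const, integral_div, ← hms_def,
      div_self hms_pos.ne', one_mul]
  have hsm : Real.sqrt m ≠ 0 := by positivity
  have hsms : Real.sqrt ms ≠ 0 := by positivity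
  -- first moment
  have hcross : ∫ θ, p θ * Real.sqrt (prs θ / pr θ) ∂μ
      = Real.sqrt (ms / m) * ∫ θ, g θ ∂μ := by
    rw [← integral_const_mul]
    apply integral_congr_ae
    filter_upwards [hpos] with θ hθ
    rcases eq_or_lt_of_le (hf0 θ) with hfe | hfp
    · simp [hg, hp_def, hps_def, ← hfe]
    · have hprp := hθ hfp
      have hspr : Real.sqrt (pr θ) ≠ 0 := by positivity
      simp only [hg, hp_def, hps_def]
      rw [Real.sqrt_div (hprs0 θ), Real.sqrt_div hms_pos.le,
        Real.sqrt_div (mul_nonneg (hpr0 θ) (hf0 θ)),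
        Real.sqrt_div (mul_nonneg (hprs0 θ) (hf0 θ)),
        Real.sqrt_mul (hpr0 θ), Real.sqrt_mul (hprs0 θ)]
      have h1 : pr θ = Real.sqrt (pr θ) * Real.sqrt (pr θ) := (Real.mul_self_sqrt (hpr0 θ)).symm
      have h2 : f θ = Real.sqrt (f θ) * Real.sqrt (f θ) := (Real.mul_self_sqrt (hf0 θ)).symm
      have h3 : m = Real.sqrt m * Real.sqrt m := (Real.mul_self_sqrt hm_pos.le).symm
      field_simp
      nth_rewrite 1 [h1]
      nth_rewrite 1 [h2]
      nth_rewrite 2 [h3]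
      ring
  rw [hcross, hmom,
    mul_div_cancel_left₀ _ (show Real.sqrt (ms / m) ≠ 0 by positivity)]
  -- expand the square
  have hexp : ∫ θ, (Real.sqrt (p θ) - Real.sqrt (ps θ)) ^ 2 ∂μ
      = (∫ θ, p θ ∂μ) + (∫ θ, ps θ ∂μ) - 2 * ∫ θ, g θ ∂μ := by
    have h1 : ∫ θ, (Real.sqrt (p θ) - Real.sqrt (ps θ)) ^ 2 ∂μ
        = ∫ θ, (p θ + ps θ) - 2 * g θ ∂μ := by
      apply integral_congr_ae
      filter_upwards with θ
      have h2 := Real.sq_sqrt (hp0 θ)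
      have h3 := Real.sq_sqrt (hps0 θ)
      simp only [hg]
      nlinarith
    rw [h1, integral_sub (show Integrable (fun θ => p θ + ps θ) μ from hp_int.add hps_int)
        (show Integrable (fun θ => 2 * g θ) μ from hg_int.const_mul 2),
      integral_add hp_int hps_int, integral_const_mul]
  rw [hexp, hintp, hintps]
  ring
end

section
/- Dimension reduction for a component-wise prior change: suppose Θ = Θ₁ × Θ₂ with μ = μ₁ ⊗ μ₂ a product of σ-finite measures, the base prior factorizes as π(θ₁,θ₂) = π₁(θ₁) π₂(θ₂), and the alternative prior only modifies the first component, π⋆(θ₁,θ₂) = π⋆₁(θ₁) π₂(θ₂). Then the squared Hellinger distance between the two posteriors satisfies H(p‖p⋆)² = 1 − [∫ p₁(θ₁) √(π⋆₁(θ₁)/π₁(θ₁)) dμ₁(θ₁)] / √(∫ p₁(θ₁) (π⋆₁(θ₁)/π₁(θ₁)) dμ₁(θ₁)), where p₁(θ₁) = ∫ p(θ₁,θ₂) dμ₂(θ₂) is the marginal base posterior of θ₁; i.e. the sensitivity reduces to expectations under the one-dimensional marginal posterior of θ₁. -/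
open MeasureTheory

/-- Dimension reduction for a component-wise prior change: if the base prior factorizes as
`π(θ₁,θ₂) = π₁(θ₁)π₂(θ₂)` and the alternative prior only modifies the first component,
`π⋆(θ₁,θ₂) = π⋆₁(θ₁)π₂(θ₂)`, then the squared Hellinger distance between the two posteriors
reduces to expectations under the marginal base posterior `p₁` of `θ₁`. -/
theorem sq_hellinger_dist_component_prior_change
    {Θ₁ Θ₂ : Type*} [MeasurableSpace Θ₁] [MeasurableSpace Θ₂]
    (μ₁ : Measure Θ₁) (μ₂ : Measure Θ₂) [SigmaFinite μ₁] [SigmaFinite μ₂]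
    (f : Θ₁ × Θ₂ → ℝ) (pr1 prs1 : Θ₁ → ℝ) (pr2 : Θ₂ → ℝ)
    (hf : Measurable f) (hpr1 : Measurable pr1) (hprs1 : Measurable prs1)
    (hpr2 : Measurable pr2)
    (hf0 : ∀ θ, 0 ≤ f θ) (hpr10 : ∀ θ₁, 0 ≤ pr1 θ₁) (hprs10 : ∀ θ₁, 0 ≤ prs1 θ₁)
    (hpr20 : ∀ θ₂, 0 ≤ pr2 θ₂)
    (pr prs : Θ₁ × Θ₂ → ℝ)
    (hpr_def : ∀ θ, pr θ = pr1 θ.1 * pr2 θ.2)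
    (hprs_def : ∀ θ, prs θ = prs1 θ.1 * pr2 θ.2)
    (m ms : ℝ)
    (hm_def : m = ∫ θ, pr θ * f θ ∂(μ₁.prod μ₂))
    (hms_def : ms = ∫ θ, prs θ * f θ ∂(μ₁.prod μ₂))
    (hm_int : Integrable (fun θ => pr θ * f θ) (μ₁.prod μ₂))
    (hms_int : Integrable (fun θ => prs θ * f θ) (μ₁.prod μ₂))
    (hm_pos : 0 < m) (hms_pos : 0 < ms)
    (hpos : ∀ᵐ θ ∂(μ₁.prod μ₂), 0 < f θ → 0 < pr θ)
    (p ps : Θ₁ × Θ₂ → ℝ)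
    (hp_def : ∀ θ, p θ = pr θ * f θ / m)
    (hps_def : ∀ θ, ps θ = prs θ * f θ / ms)
    (p1 : Θ₁ → ℝ)
    (hp1_def : ∀ θ₁, p1 θ₁ = ∫ θ₂, p (θ₁, θ₂) ∂μ₂)
    (hpos1 : ∀ᵐ θ₁ ∂μ₁, 0 < p1 θ₁ → 0 < pr1 θ₁) :
    (1 / 2) * ∫ θ, (Real.sqrt (p θ) - Real.sqrt (ps θ)) ^ 2 ∂(μ₁.prod μ₂)
      = 1 - (∫ θ₁, p1 θ₁ * Real.sqrt (prs1 θ₁ / pr1 θ₁) ∂μ₁)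
            / Real.sqrt (∫ θ₁, p1 θ₁ * (prs1 θ₁ / pr1 θ₁) ∂μ₁) := by

  have hmne : m ≠ 0 := hm_pos.ne'
  have hmsne : ms ≠ 0 := hms_pos.ne'
  set G : Θ₁ → ℝ := fun a => ∫ b, pr2 b * f (a, b) ∂μ₂ with hG
  have hp1G : ∀ a, p1 a = pr1 a / m * G a := by
    intro a
    rw [hp1_def,
      show (fun b => p (a, b)) = fun b => (pr1 a / m) * (pr2 b * f (a, b)) from
        funext fun b => by rw [hp_def, hpr_def]; ring,
      integral_const_mul]
  have hmeas_cross : Measurable fun θ : Θ₁ × Θ₂ =>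
      Real.sqrt (pr1 θ.1 * prs1 θ.1) * (pr2 θ.2 * f θ) :=
    (((hpr1.comp measurable_fst).mul (hprs1.comp measurable_fst)).sqrt).mul
      ((hpr2.comp measurable_snd).mul hf)
  have hcross_int : Integrable
      (fun θ : Θ₁ × Θ₂ => Real.sqrt (pr1 θ.1 * prs1 θ.1) * (pr2 θ.2 * f θ)) (μ₁.prod μ₂) := by
    refine Integrable.mono' ((hm_int.add hms_int).div_const 2)
      hmeas_cross.aestronglyMeasurable ?_
    refine Filter.Eventually.of_forall fun θ => ?_
    have h1 := hpr10 θ.1; have h2 := hprs10 θ.1; have h3 := hpr20 θ.2; have h4 := hf0 θ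
    have hs : Real.sqrt (pr1 θ.1 * prs1 θ.1) ≤ (pr1 θ.1 + prs1 θ.1) / 2 := by
      nlinarith [Real.sq_sqrt (mul_nonneg h1 h2), Real.sqrt_nonneg (pr1 θ.1 * prs1 θ.1),
        sq_nonneg (pr1 θ.1 - prs1 θ.1),
        sq_nonneg (pr1 θ.1 + prs1 θ.1 - 2 * Real.sqrt (pr1 θ.1 * prs1 θ.1))]
    have hnn : 0 ≤ Real.sqrt (pr1 θ.1 * prs1 θ.1) * (pr2 θ.2 * f θ) :=
      mul_nonneg (Real.sqrt_nonneg _) (mul_nonneg h3 h4)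
    simp only [Real.norm_eq_abs, abs_of_nonneg hnn, hpr_def, hprs_def, Pi.add_apply]
    nlinarith [mul_le_mul_of_nonneg_right hs (mul_nonneg h3 h4), mul_nonneg h3 h4]
  set I := ∫ θ, Real.sqrt (pr1 θ.1 * prs1 θ.1) * (pr2 θ.2 * f θ) ∂(μ₁.prod μ₂) with hI
  have hI_iter : I = ∫ a, Real.sqrt (pr1 a * prs1 a) * G a ∂μ₁ := by
    rw [hI, integral_prod _ hcross_int]
    refine integral_congr_ae (Filter.Eventually.of_forall fun a => ?_)
    show ∫ b, Real.sqrt (pr1 a * prs1 a) * (pr2 b * f (a, b)) ∂μ₂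
      = Real.sqrt (pr1 a * prs1 a) * G a
    rw [integral_const_mul]
  have hms_iter : ms = ∫ a, prs1 a * G a ∂μ₁ := by
    rw [hms_def, integral_prod _ hms_int]
    refine integral_congr_ae (Filter.Eventually.of_forall fun a => ?_)
    show ∫ b, prs (a, b) * f (a, b) ∂μ₂ = prs1 a * G a
    rw [show (fun b => prs (a, b) * f (a, b)) = fun b => prs1 a * (pr2 b * f (a, b)) from
      funext fun b => by rw [hprs_def]; ring, integral_const_mul]
  have hae : ∀ᵐ a ∂μ₁, pr1 a = 0 → G a = 0 := by
    filter_upwards [Measure.ae_ae_of_ae_prod hpos] with a ha h0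
    have hz : ∀ᵐ b ∂μ₂, pr2 b * f (a, b) = 0 := by
      filter_upwards [ha] with b hb
      by_contra hne
      have hf' : 0 < f (a, b) :=
        lt_of_le_of_ne (hf0 _) (Ne.symm (right_ne_zero_of_mul hne))
      have hpr' := hb hf'
      rw [hpr_def] at hpr'
      simp only [h0, zero_mul] at hpr'
      exact lt_irrefl 0 hpr'
    simp only [hG]
    rw [integral_congr_ae hz, integral_zero]
  have hD : ∫ a, p1 a * (prs1 a / pr1 a) ∂μ₁ = ms / m := by
    have he : ∀ᵐ a ∂μ₁, p1 a * (prs1 a / pr1 a) = prs1 a * G a / m := by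
      filter_upwards [hae] with a ha
      rcases eq_or_lt_of_le (hpr10 a) with h0 | h0
      · rw [hp1G a, ← h0, ha h0.symm]; simp
      · rw [hp1G a]; field_simp
    rw [integral_congr_ae he, integral_div, ← hms_iter]
  have hN : ∫ a, p1 a * Real.sqrt (prs1 a / pr1 a) ∂μ₁ = I / m := by
    have he : ∀ a, p1 a * Real.sqrt (prs1 a / pr1 a)
        = Real.sqrt (pr1 a * prs1 a) * G a / m := by
      intro a
      rcases eq_or_lt_of_le (hpr10 a) with h0 | h0
      · rw [hp1G a, ← h0]; simp
      · have h1 : pr1 a * Real.sqrt (prs1 a / pr1 a) = Real.sqrt (pr1 a * prs1 a) := by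
          rw [Real.sqrt_div (hprs10 a), Real.sqrt_mul (hpr10 a)]
          have hs : Real.sqrt (pr1 a) ≠ 0 := (Real.sqrt_pos.mpr h0).ne'
          field_simp
          linear_combination Real.sqrt (prs1 a) * Real.mul_self_sqrt (hpr10 a) - 2 * Real.sqrt (prs1 a) * Real.sq_sqrt (hpr10 a)
        rw [hp1G a, ← h1]; ring
    simp only [he]
    rw [integral_div, ← hI_iter]
  have hp_int : Integrable p (μ₁.prod μ₂) := by
    have h : p = fun θ => pr θ * f θ / m := funext hp_def
    rw [h]; exact hm_int.div_const m
  have hps_int : Integrable ps (μ₁.prod μ₂) := by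
    have h : ps = fun θ => prs θ * f θ / ms := funext hps_def
    rw [h]; exact hms_int.div_const ms
  have hq : ∀ θ, Real.sqrt (p θ) * Real.sqrt (ps θ)
      = Real.sqrt (pr1 θ.1 * prs1 θ.1) * (pr2 θ.2 * f θ) / Real.sqrt (m * ms) := by
    intro θ
    have h1 := hpr10 θ.1; have h2 := hprs10 θ.1; have h3 := hpr20 θ.2; have h4 := hf0 θ
    have hm' := hm_pos.le; have hms' := hms_pos.le
    rw [hp_def, hps_def, hpr_def, hprs_def,
      ← Real.sqrt_mul (by positivity : (0:ℝ) ≤ pr1 θ.1 * pr2 θ.2 * f θ / m),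
      show pr1 θ.1 * pr2 θ.2 * f θ / m * (prs1 θ.1 * pr2 θ.2 * f θ / ms)
        = pr1 θ.1 * prs1 θ.1 * (pr2 θ.2 * f θ) ^ 2 / (m * ms) from by ring,
      Real.sqrt_div (by positivity : (0:ℝ) ≤ pr1 θ.1 * prs1 θ.1 * (pr2 θ.2 * f θ) ^ 2),
      Real.sqrt_mul (by positivity : (0:ℝ) ≤ pr1 θ.1 * prs1 θ.1),
      Real.sqrt_sq (by positivity : (0:ℝ) ≤ pr2 θ.2 * f θ)]
  have hsq : ∀ θ, (Real.sqrt (p θ) - Real.sqrt (ps θ)) ^ 2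
      = p θ + ps θ - 2 * (Real.sqrt (p θ) * Real.sqrt (ps θ)) := by
    intro θ
    have h1 : 0 ≤ p θ := by
      rw [hp_def, hpr_def]
      exact div_nonneg (mul_nonneg (mul_nonneg (hpr10 _) (hpr20 _)) (hf0 _)) hm_pos.le
    have h2 : 0 ≤ ps θ := by
      rw [hps_def, hprs_def]
      exact div_nonneg (mul_nonneg (mul_nonneg (hprs10 _) (hpr20 _)) (hf0 _)) hms_pos.le
    rw [sub_sq, Real.sq_sqrt h1, Real.sq_sqrt h2]; ring
  have hip : ∫ θ, p θ ∂(μ₁.prod μ₂) = 1 := by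
    simp only [hp_def]
    rw [integral_div, ← hm_def, div_self hmne]
  have hips : ∫ θ, ps θ ∂(μ₁.prod μ₂) = 1 := by
    simp only [hps_def]
    rw [integral_div, ← hms_def, div_self hmsne]
  have hsplit : ∫ θ, (Real.sqrt (p θ) - Real.sqrt (ps θ)) ^ 2 ∂(μ₁.prod μ₂)
      = (∫ θ, p θ ∂(μ₁.prod μ₂)) + (∫ θ, ps θ ∂(μ₁.prod μ₂))
        - 2 * (I / Real.sqrt (m * ms)) := by
    have hadd : Integrable (fun θ => p θ + ps θ) (μ₁.prod μ₂) := hp_int.add hps_int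
    have h2int : Integrable (fun θ : Θ₁ × Θ₂ =>
        2 * (Real.sqrt (pr1 θ.1 * prs1 θ.1) * (pr2 θ.2 * f θ) / Real.sqrt (m * ms)))
        (μ₁.prod μ₂) := (hcross_int.div_const _).const_mul 2
    simp only [hsq, hq]
    rw [integral_sub hadd h2int, integral_add hp_int hps_int, integral_const_mul,
      integral_div, ← hI]
  have harith : I / Real.sqrt (m * ms) = (I / m) / Real.sqrt (ms / m) := by
    have h1 : Real.sqrt m ≠ 0 := (Real.sqrt_pos.mpr hm_pos).ne'
    have h2 : Real.sqrt ms ≠ 0 := (Real.sqrt_pos.mpr hms_pos).ne'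
    rw [Real.sqrt_mul hm_pos.le, Real.sqrt_div hms_pos.le]
    field_simp
    linear_combination -I * Real.sq_sqrt hm_pos.le
  rw [hsplit, hip, hips, hN, hD, harith]
  ring
end

section
/- Theorem 2 (Hellinger part): the squared Hellinger distance between the base and alternative joint posteriors of latent variables and parameters satisfies H(P‖P⋆)² = 1 − [∫ P(η,ψ,θ) √(π⋆(ψ,θ)/π(ψ,θ)) d(ν ⊗ μ_Ψ ⊗ μ_Θ)] / √(∫ P(η,ψ,θ) (π⋆(ψ,θ)/π(ψ,θ)) d(ν ⊗ μ_Ψ ⊗ μ_Θ)); both integrals depend on (ψ,θ) only through the prior ratio, i.e. they are expectations under the base marginal posterior of (ψ,θ). -/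
open MeasureTheory

lemma lvm_aux_sqrt_prod (a b c m ms : ℝ) (ha : 0 ≤ a) (hb : 0 ≤ b) (hc : 0 ≤ c)
    (hm : 0 < m) (hms : 0 < ms) :
    Real.sqrt (a * b / m) * Real.sqrt (a * c / ms)
      = a * Real.sqrt (b * c) / Real.sqrt (m * ms) := by
  rw [← Real.sqrt_mul (by positivity),
    show a * b / m * (a * c / ms) = a ^ 2 * (b * c) / (m * ms) by ring,
    Real.sqrt_div (by positivity), Real.sqrt_mul (by positivity), Real.sqrt_sq ha]

lemma lvm_aux_sqrt_ratio (a b c m : ℝ) (hb : 0 < b) :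
    a * b / m * Real.sqrt (c / b) = a * Real.sqrt (b * c) / m := by
  have h1 : Real.sqrt (b * c) = b * Real.sqrt (c / b) := by
    rw [show b * c = b ^ 2 * (c / b) by field_simp,
      Real.sqrt_mul (sq_nonneg b), Real.sqrt_sq hb.le]
  rw [h1]; ring

lemma lvm_aux_amgm (a b : ℝ) (ha : 0 ≤ a) (hb : 0 ≤ b) :
    Real.sqrt (a * b) ≤ (a + b) / 2 := by
  rw [show (a + b) / 2 = Real.sqrt (((a + b) / 2) ^ 2) from (Real.sqrt_sq (by positivity)).symm]
  exact Real.sqrt_le_sqrt (by nlinarith [sq_nonneg (a - b)])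

/-- Theorem 2 (Hellinger part): the squared Hellinger distance between the base and
alternative joint posteriors of latent variables and parameters. -/
theorem lvm_sq_hellinger_dist_joint
    {H Ψ Θ : Type*} [MeasurableSpace H] [MeasurableSpace Ψ] [MeasurableSpace Θ]
    (ν : Measure H) (μΨ : Measure Ψ) (μΘ : Measure Θ)
    [SigmaFinite ν] [SigmaFinite μΨ] [SigmaFinite μΘ]
    (g : H × Ψ → ℝ) (q : H × Θ → ℝ) (pr prs : Ψ × Θ → ℝ)
    (hg : Measurable g) (hq : Measurable q) (hpr : Measurable pr) (hprs : Measurable prs)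
    (hg0 : ∀ z, 0 ≤ g z) (hq0 : ∀ z, 0 ≤ q z) (hpr0 : ∀ w, 0 ≤ pr w) (hprs0 : ∀ w, 0 ≤ prs w)
    (m ms : ℝ)
    (hm_def : m = ∫ z : H × Ψ × Θ,
      g (z.1, z.2.1) * q (z.1, z.2.2) * pr z.2 ∂(ν.prod (μΨ.prod μΘ)))
    (hms_def : ms = ∫ z : H × Ψ × Θ,
      g (z.1, z.2.1) * q (z.1, z.2.2) * prs z.2 ∂(ν.prod (μΨ.prod μΘ)))
    (hm_int : Integrable
      (fun z : H × Ψ × Θ => g (z.1, z.2.1) * q (z.1, z.2.2) * pr z.2) (ν.prod (μΨ.prod μΘ)))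
    (hms_int : Integrable
      (fun z : H × Ψ × Θ => g (z.1, z.2.1) * q (z.1, z.2.2) * prs z.2) (ν.prod (μΨ.prod μΘ)))
    (hm_pos : 0 < m) (hms_pos : 0 < ms)
    (hpos : ∀ᵐ z : H × Ψ × Θ ∂(ν.prod (μΨ.prod μΘ)),
      0 < g (z.1, z.2.1) * q (z.1, z.2.2) → 0 < pr z.2)
    (P Ps : H × Ψ × Θ → ℝ)
    (hP_def : ∀ z : H × Ψ × Θ, P z = g (z.1, z.2.1) * q (z.1, z.2.2) * pr z.2 / m)
    (hPs_def : ∀ z : H × Ψ × Θ, Ps z = g (z.1, z.2.1) * q (z.1, z.2.2) * prs z.2 / ms) :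
    (1 / 2) * ∫ z : H × Ψ × Θ,
        (Real.sqrt (P z) - Real.sqrt (Ps z)) ^ 2 ∂(ν.prod (μΨ.prod μΘ))
      = 1 - (∫ z : H × Ψ × Θ, P z * Real.sqrt (prs z.2 / pr z.2) ∂(ν.prod (μΨ.prod μΘ)))
            / Real.sqrt (∫ z : H × Ψ × Θ,
                P z * (prs z.2 / pr z.2) ∂(ν.prod (μΨ.prod μΘ))) := by
  set μ := ν.prod (μΨ.prod μΘ) with hμ
  have hm_ne : m ≠ 0 := hm_pos.ne'
  have hms_ne : ms ≠ 0 := hms_pos.ne'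
  have hsm : 0 < Real.sqrt m := Real.sqrt_pos.mpr hm_pos
  have hsms : 0 < Real.sqrt ms := Real.sqrt_pos.mpr hms_pos
  have hF0 : ∀ z : H × Ψ × Θ, 0 ≤ g (z.1, z.2.1) * q (z.1, z.2.2) :=
    fun z => mul_nonneg (hg0 _) (hq0 _)
  have hFmeas : Measurable fun z : H × Ψ × Θ => g (z.1, z.2.1) * q (z.1, z.2.2) :=
    (hg.comp (measurable_fst.prodMk (measurable_fst.comp measurable_snd))).mul
      (hq.comp (measurable_fst.prodMk (measurable_snd.comp measurable_snd)))
  -- integrability of the cross term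
  have hIntA : Integrable (fun z : H × Ψ × Θ =>
      g (z.1, z.2.1) * q (z.1, z.2.2) * Real.sqrt (pr z.2 * prs z.2)) μ := by
    refine Integrable.mono' ((hm_int.add hms_int).div_const 2) ?_ ?_
    · exact (hFmeas.mul
        (((hpr.comp measurable_snd).mul (hprs.comp measurable_snd)).sqrt)).aestronglyMeasurable
    · filter_upwards with z
      rw [Real.norm_of_nonneg (mul_nonneg (hF0 z) (Real.sqrt_nonneg _))]
      calc g (z.1, z.2.1) * q (z.1, z.2.2) * Real.sqrt (pr z.2 * prs z.2)
          ≤ g (z.1, z.2.1) * q (z.1, z.2.2) * ((pr z.2 + prs z.2) / 2) :=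
            mul_le_mul_of_nonneg_left (lvm_aux_amgm _ _ (hpr0 _) (hprs0 _)) (hF0 z)
        _ = (g (z.1, z.2.1) * q (z.1, z.2.2) * pr z.2
              + g (z.1, z.2.1) * q (z.1, z.2.2) * prs z.2) / 2 := by ring
  set A := ∫ z : H × Ψ × Θ,
    g (z.1, z.2.1) * q (z.1, z.2.2) * Real.sqrt (pr z.2 * prs z.2) ∂μ with hA
  have hPint : Integrable P μ := by
    have h : P = fun z : H × Ψ × Θ => g (z.1, z.2.1) * q (z.1, z.2.2) * pr z.2 / m :=
      funext hP_def
    rw [h]; exact hm_int.div_const m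
  have hPsint : Integrable Ps μ := by
    have h : Ps = fun z : H × Ψ × Θ => g (z.1, z.2.1) * q (z.1, z.2.2) * prs z.2 / ms :=
      funext hPs_def
    rw [h]; exact hms_int.div_const ms
  have hIP : ∫ z, P z ∂μ = 1 := by
    simp only [hP_def]
    rw [integral_div, ← hm_def, div_self hm_ne]
  have hIPs : ∫ z, Ps z ∂μ = 1 := by
    simp only [hPs_def]
    rw [integral_div, ← hms_def, div_self hms_ne]
  have hsqz : ∀ z : H × Ψ × Θ, Real.sqrt (P z) * Real.sqrt (Ps z)
      = g (z.1, z.2.1) * q (z.1, z.2.2) * Real.sqrt (pr z.2 * prs z.2) / Real.sqrt (m * ms) := by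
    intro z
    rw [hP_def, hPs_def]
    exact lvm_aux_sqrt_prod _ _ _ _ _ (hF0 z) (hpr0 _) (hprs0 _) hm_pos hms_pos
  have hexp : (fun z : H × Ψ × Θ => (Real.sqrt (P z) - Real.sqrt (Ps z)) ^ 2)
      = fun z : H × Ψ × Θ => P z + Ps z
          - 2 * (g (z.1, z.2.1) * q (z.1, z.2.2) * Real.sqrt (pr z.2 * prs z.2)
            / Real.sqrt (m * ms)) := by
    funext z
    have hPz : 0 ≤ P z := by
      rw [hP_def]; exact div_nonneg (mul_nonneg (hF0 z) (hpr0 _)) hm_pos.le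
    have hPsz : 0 ≤ Ps z := by
      rw [hPs_def]; exact div_nonneg (mul_nonneg (hF0 z) (hprs0 _)) hms_pos.le
    rw [sub_sq, Real.sq_sqrt hPz, Real.sq_sqrt hPsz, mul_assoc, hsqz z]; ring
  have hLHS : ∫ z, (Real.sqrt (P z) - Real.sqrt (Ps z)) ^ 2 ∂μ
      = 2 - 2 * (A / Real.sqrt (m * ms)) := by
    have hsumint : Integrable (fun z : H × Ψ × Θ => P z + Ps z) μ := hPint.add hPsint
    have hint2 : Integrable (fun z : H × Ψ × Θ =>
        2 * (g (z.1, z.2.1) * q (z.1, z.2.2) * Real.sqrt (pr z.2 * prs z.2)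
          / Real.sqrt (m * ms))) μ := (hIntA.div_const _).const_mul 2
    rw [hexp, integral_sub hsumint hint2,
      integral_add hPint hPsint, hIP, hIPs, integral_const_mul, integral_div, ← hA]
    ring
  have hFzero : ∀ z : H × Ψ × Θ, (0 < g (z.1, z.2.1) * q (z.1, z.2.2) → 0 < pr z.2) →
      pr z.2 = 0 → g (z.1, z.2.1) * q (z.1, z.2.2) = 0 := by
    intro z hz hp
    by_contra h
    have := hz ((hF0 z).lt_of_ne (Ne.symm h))
    rw [hp] at this; exact lt_irrefl 0 this
  have hR1 : ∫ z, P z * Real.sqrt (prs z.2 / pr z.2) ∂μ = A / m := by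
    rw [hA, ← integral_div]
    refine integral_congr_ae ?_
    filter_upwards [hpos] with z hz
    rw [hP_def]
    rcases (hpr0 z.2).lt_or_eq with hp | hp
    · exact lvm_aux_sqrt_ratio _ _ _ _ hp
    · rw [hFzero z hz hp.symm]; ring
  have hR2 : ∫ z, P z * (prs z.2 / pr z.2) ∂μ = ms / m := by
    have h : ∫ z, P z * (prs z.2 / pr z.2) ∂μ
        = ∫ z, g (z.1, z.2.1) * q (z.1, z.2.2) * prs z.2 / m ∂μ := by
      refine integral_congr_ae ?_
      filter_upwards [hpos] with z hz
      rw [hP_def]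
      rcases (hpr0 z.2).lt_or_eq with hp | hp
      · field_simp
      · rw [hFzero z hz hp.symm]; ring
    rw [h, integral_div, ← hms_def]
  rw [hLHS, hR1, hR2, Real.sqrt_div hms_pos.le, Real.sqrt_mul hm_pos.le]
  have hmm : Real.sqrt m * Real.sqrt m = m := Real.mul_self_sqrt hm_pos.le
  have key : A / m / (Real.sqrt ms / Real.sqrt m) = A / (Real.sqrt m * Real.sqrt ms) := by
    rw [div_div_eq_mul_div, div_mul_eq_mul_div, div_div,
      div_eq_div_iff (mul_pos hm_pos hsms).ne' (mul_pos hsm hsms).ne']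
    linear_combination A * Real.sqrt ms * hmm
  rw [key]; ring
end

section
/- Theorem 2 (Kullback–Leibler part): if (η,ψ,θ) ↦ P log(P/P⋆) and (η,ψ,θ) ↦ P log(π⋆(ψ,θ)/π(ψ,θ)) are integrable, then KL(P‖P⋆) = log(∫ P(η,ψ,θ) (π⋆(ψ,θ)/π(ψ,θ)) d(ν ⊗ μ_Ψ ⊗ μ_Θ)) − ∫ P(η,ψ,θ) log(π⋆(ψ,θ)/π(ψ,θ)) d(ν ⊗ μ_Ψ ⊗ μ_Θ). -/
open MeasureTheory

/-- Theorem 2 (Kullback–Leibler part): the KL divergence between the base and alternative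
joint posteriors of latent variables and parameters. -/
theorem lvm_kl_joint
    {H Ψ Θ : Type*} [MeasurableSpace H] [MeasurableSpace Ψ] [MeasurableSpace Θ]
    (ν : Measure H) (μΨ : Measure Ψ) (μΘ : Measure Θ)
    [SigmaFinite ν] [SigmaFinite μΨ] [SigmaFinite μΘ]
    (g : H × Ψ → ℝ) (q : H × Θ → ℝ) (pr prs : Ψ × Θ → ℝ)
    (hg : Measurable g) (hq : Measurable q) (hpr : Measurable pr) (hprs : Measurable prs)
    (hg0 : ∀ z, 0 ≤ g z) (hq0 : ∀ z, 0 ≤ q z) (hpr0 : ∀ w, 0 ≤ pr w) (hprs0 : ∀ w, 0 ≤ prs w)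
    (m ms : ℝ)
    (hm_def : m = ∫ z : H × Ψ × Θ,
      g (z.1, z.2.1) * q (z.1, z.2.2) * pr z.2 ∂(ν.prod (μΨ.prod μΘ)))
    (hms_def : ms = ∫ z : H × Ψ × Θ,
      g (z.1, z.2.1) * q (z.1, z.2.2) * prs z.2 ∂(ν.prod (μΨ.prod μΘ)))
    (hm_int : Integrable
      (fun z : H × Ψ × Θ => g (z.1, z.2.1) * q (z.1, z.2.2) * pr z.2) (ν.prod (μΨ.prod μΘ)))
    (hms_int : Integrable
      (fun z : H × Ψ × Θ => g (z.1, z.2.1) * q (z.1, z.2.2) * prs z.2) (ν.prod (μΨ.prod μΘ)))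
    (hm_pos : 0 < m) (hms_pos : 0 < ms)
    (hpos : ∀ᵐ z : H × Ψ × Θ ∂(ν.prod (μΨ.prod μΘ)),
      0 < g (z.1, z.2.1) * q (z.1, z.2.2) → 0 < pr z.2)
    (hposs : ∀ᵐ z : H × Ψ × Θ ∂(ν.prod (μΨ.prod μΘ)),
      0 < g (z.1, z.2.1) * q (z.1, z.2.2) → 0 < prs z.2)
    (P Ps : H × Ψ × Θ → ℝ)
    (hP_def : ∀ z : H × Ψ × Θ, P z = g (z.1, z.2.1) * q (z.1, z.2.2) * pr z.2 / m)
    (hPs_def : ∀ z : H × Ψ × Θ, Ps z = g (z.1, z.2.1) * q (z.1, z.2.2) * prs z.2 / ms)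
    (hkl_int : Integrable
      (fun z : H × Ψ × Θ => P z * Real.log (P z / Ps z)) (ν.prod (μΨ.prod μΘ)))
    (hlr_int : Integrable
      (fun z : H × Ψ × Θ => P z * Real.log (prs z.2 / pr z.2)) (ν.prod (μΨ.prod μΘ))) :
    ∫ z : H × Ψ × Θ, P z * Real.log (P z / Ps z) ∂(ν.prod (μΨ.prod μΘ))
      = Real.log (∫ z : H × Ψ × Θ, P z * (prs z.2 / pr z.2) ∂(ν.prod (μΨ.prod μΘ)))
        - ∫ z : H × Ψ × Θ, P z * Real.log (prs z.2 / pr z.2) ∂(ν.prod (μΨ.prod μΘ)) := by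
  set M := ν.prod (μΨ.prod μΘ) with hM
  -- Integrability of P
  have hP_int : Integrable P M := by
    have : P = fun z => (g (z.1, z.2.1) * q (z.1, z.2.2) * pr z.2) / m := funext hP_def
    rw [this]; exact hm_int.div_const m
  -- ∫ P = 1
  have hintP : ∫ z, P z ∂M = 1 := by
    simp only [hP_def]
    rw [integral_div, ← hm_def, div_self hm_pos.ne']
  -- ∫ P (prs/pr) = ms / m
  have hPprs_ae : ∀ᵐ z ∂M, P z * (prs z.2 / pr z.2)
      = g (z.1, z.2.1) * q (z.1, z.2.2) * prs z.2 / m := by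
    filter_upwards [hpos] with z hz
    rcases lt_or_eq_of_le (mul_nonneg (hg0 _) (hq0 _)) with hA | hA
    · have hpr' := hz hA
      rw [hP_def]
      field_simp
    · rw [hP_def, ← hA]
      simp
  have hPprs : ∫ z, P z * (prs z.2 / pr z.2) ∂M = ms / m := by
    rw [integral_congr_ae hPprs_ae, integral_div, ← hms_def]
  -- pointwise log identity
  have hlog_ae : ∀ᵐ z ∂M, P z * Real.log (P z / Ps z)
      = P z * Real.log (ms / m) - P z * Real.log (prs z.2 / pr z.2) := by
    filter_upwards [hpos, hposs] with z h1 h2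
    rcases lt_or_eq_of_le (mul_nonneg (hg0 _) (hq0 _)) with hA | hA
    · have hpr' := h1 hA
      have hprs' := h2 hA
      have hP' : P z = g (z.1, z.2.1) * q (z.1, z.2.2) * pr z.2 / m := hP_def z
      have hPs' : Ps z = g (z.1, z.2.1) * q (z.1, z.2.2) * prs z.2 / ms := hPs_def z
      have hratio : P z / Ps z = (ms / m) / (prs z.2 / pr z.2) := by
        rw [hP', hPs']
        field_simp
        ring
        have hg' : g (z.1, z.2.1) ≠ 0 := left_ne_zero_of_mul hA.ne'
        have hq' : q (z.1, z.2.2) ≠ 0 := right_ne_zero_of_mul hA.ne'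
        field_simp
      rw [hratio, Real.log_div (by positivity) (by positivity)]
      ring
    · rw [hP_def, ← hA]
      simp
  have hPc_int : Integrable (fun z => P z * Real.log (ms / m)) M :=
    hP_int.mul_const _
  calc ∫ z, P z * Real.log (P z / Ps z) ∂M
      = ∫ z, (P z * Real.log (ms / m) - P z * Real.log (prs z.2 / pr z.2)) ∂M :=
        integral_congr_ae hlog_ae
    _ = ∫ z, P z * Real.log (ms / m) ∂M - ∫ z, P z * Real.log (prs z.2 / pr z.2) ∂M :=
        integral_sub hPc_int hlr_int
    _ = Real.log (∫ z, P z * (prs z.2 / pr z.2) ∂M)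
        - ∫ z, P z * Real.log (prs z.2 / pr z.2) ∂M := by
        rw [integral_mul_const, hintP, one_mul, hPprs]
end

section
/- Theorem 3 (Hellinger part): the squared Hellinger distance between the base and alternative marginal posteriors of the latent variable satisfies H(P_η‖P⋆_η)² = 1 − [∫ P_η(η) √(R(η)) dν(η)] / √(∫ P(η,ψ,θ) (π⋆(ψ,θ)/π(ψ,θ)) d(ν ⊗ μ_Ψ ⊗ μ_Θ)), where R(η) = [∫ g(η,ψ) q(η,θ) π⋆(ψ,θ) d(μ_Ψ ⊗ μ_Θ)] / [∫ g(η,ψ) q(η,θ) π(ψ,θ) d(μ_Ψ ⊗ μ_Θ)] is the conditional-posterior expectation of the prior ratio π⋆/π given η. -/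
open MeasureTheory

private lemma hellinger_aux_sqrt_eq (a b m ms : ℝ) (ha : 0 ≤ a) (hb : 0 ≤ b)
    (hm : 0 < m) (hms : 0 < ms) :
    (a/m) * Real.sqrt (b/a) = Real.sqrt (ms/m) * (Real.sqrt (a/m) * Real.sqrt (b/ms)) := by
  rw [Real.sqrt_div hb, Real.sqrt_div hms.le, Real.sqrt_div ha, Real.sqrt_div hb]
  rcases eq_or_lt_of_le ha with h | h
  · simp [← h]
  · have h1 : Real.sqrt a * Real.sqrt a = a := Real.mul_self_sqrt ha
    have h2 : Real.sqrt m * Real.sqrt m = m := Real.mul_self_sqrt hm.le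
    have h3 : Real.sqrt ms * Real.sqrt ms = ms := Real.mul_self_sqrt hms.le
    have ha' : 0 < Real.sqrt a := Real.sqrt_pos.2 h
    have hm' : 0 < Real.sqrt m := Real.sqrt_pos.2 hm
    have hms' : 0 < Real.sqrt ms := Real.sqrt_pos.2 hms
    field_simp
    linear_combination (a*Real.sqrt b)*h2 - (Real.sqrt b*m)*h1

/-- Theorem 3 (Hellinger part): the squared Hellinger distance between the base and
alternative marginal posteriors of the latent variable. -/
theorem lvm_sq_hellinger_dist_marginal
    {H Ψ Θ : Type*} [MeasurableSpace H] [MeasurableSpace Ψ] [MeasurableSpace Θ]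
    (ν : Measure H) (μΨ : Measure Ψ) (μΘ : Measure Θ)
    [SigmaFinite ν] [SigmaFinite μΨ] [SigmaFinite μΘ]
    (g : H × Ψ → ℝ) (q : H × Θ → ℝ) (pr prs : Ψ × Θ → ℝ)
    (hg : Measurable g) (hq : Measurable q) (hpr : Measurable pr) (hprs : Measurable prs)
    (hg0 : ∀ z, 0 ≤ g z) (hq0 : ∀ z, 0 ≤ q z) (hpr0 : ∀ w, 0 ≤ pr w) (hprs0 : ∀ w, 0 ≤ prs w)
    (m ms : ℝ)
    (hm_def : m = ∫ z : H × Ψ × Θ,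
      g (z.1, z.2.1) * q (z.1, z.2.2) * pr z.2 ∂(ν.prod (μΨ.prod μΘ)))
    (hms_def : ms = ∫ z : H × Ψ × Θ,
      g (z.1, z.2.1) * q (z.1, z.2.2) * prs z.2 ∂(ν.prod (μΨ.prod μΘ)))
    (hm_int : Integrable
      (fun z : H × Ψ × Θ => g (z.1, z.2.1) * q (z.1, z.2.2) * pr z.2) (ν.prod (μΨ.prod μΘ)))
    (hms_int : Integrable
      (fun z : H × Ψ × Θ => g (z.1, z.2.1) * q (z.1, z.2.2) * prs z.2) (ν.prod (μΨ.prod μΘ)))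
    (hm_pos : 0 < m) (hms_pos : 0 < ms)
    (hpos : ∀ᵐ z : H × Ψ × Θ ∂(ν.prod (μΨ.prod μΘ)),
      0 < g (z.1, z.2.1) * q (z.1, z.2.2) → 0 < pr z.2)
    (P Ps : H × Ψ × Θ → ℝ)
    (hP_def : ∀ z : H × Ψ × Θ, P z = g (z.1, z.2.1) * q (z.1, z.2.2) * pr z.2 / m)
    (hPs_def : ∀ z : H × Ψ × Θ, Ps z = g (z.1, z.2.1) * q (z.1, z.2.2) * prs z.2 / ms)
    (Pη Psη R : H → ℝ)
    (hPη_def : ∀ η, Pη η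
      = (∫ w : Ψ × Θ, g (η, w.1) * q (η, w.2) * pr w ∂(μΨ.prod μΘ)) / m)
    (hPsη_def : ∀ η, Psη η
      = (∫ w : Ψ × Θ, g (η, w.1) * q (η, w.2) * prs w ∂(μΨ.prod μΘ)) / ms)
    (hR_def : ∀ η, R η
      = (∫ w : Ψ × Θ, g (η, w.1) * q (η, w.2) * prs w ∂(μΨ.prod μΘ))
        / ∫ w : Ψ × Θ, g (η, w.1) * q (η, w.2) * pr w ∂(μΨ.prod μΘ)) :
    (1 / 2) * ∫ η, (Real.sqrt (Pη η) - Real.sqrt (Psη η)) ^ 2 ∂ν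
      = 1 - (∫ η, Pη η * Real.sqrt (R η) ∂ν)
            / Real.sqrt (∫ z : H × Ψ × Θ,
                P z * (prs z.2 / pr z.2) ∂(ν.prod (μΨ.prod μΘ))) := by
  -- notation for the inner integrals
  set A : H → ℝ := fun η => ∫ w : Ψ × Θ, g (η, w.1) * q (η, w.2) * pr w ∂(μΨ.prod μΘ) with hA
  set B : H → ℝ := fun η => ∫ w : Ψ × Θ, g (η, w.1) * q (η, w.2) * prs w ∂(μΨ.prod μΘ) with hB
  have hA0 : ∀ η, 0 ≤ A η := fun η =>
    integral_nonneg fun w => mul_nonneg (mul_nonneg (hg0 _) (hq0 _)) (hpr0 _)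
  have hB0 : ∀ η, 0 ≤ B η := fun η =>
    integral_nonneg fun w => mul_nonneg (mul_nonneg (hg0 _) (hq0 _)) (hprs0 _)
  have hA_int : Integrable A ν := hm_int.integral_prod_left
  have hB_int : Integrable B ν := hms_int.integral_prod_left
  have hA_eq : ∫ η, A η ∂ν = m := by rw [hm_def, integral_prod _ hm_int]
  have hB_eq : ∫ η, B η ∂ν = ms := by rw [hms_def, integral_prod _ hms_int]
  have hPη_eq : ∀ η, Pη η = A η / m := hPη_def
  have hPsη_eq : ∀ η, Psη η = B η / ms := hPsη_def
  have hPη_int : Integrable Pη ν := by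
    refine (hA_int.div_const m).congr (Filter.Eventually.of_forall fun η => ?_)
    rw [hPη_eq η]
  have hPsη_int : Integrable Psη ν := by
    refine (hB_int.div_const ms).congr (Filter.Eventually.of_forall fun η => ?_)
    rw [hPsη_eq η]
  have hPη0 : ∀ η, 0 ≤ Pη η := fun η => by
    rw [hPη_eq]; exact div_nonneg (hA0 η) hm_pos.le
  have hPsη0 : ∀ η, 0 ≤ Psη η := fun η => by
    rw [hPsη_eq]; exact div_nonneg (hB0 η) hms_pos.le
  have hPη_one : ∫ η, Pη η ∂ν = 1 := by
    simp_rw [hPη_eq]; rw [integral_div, hA_eq, div_self hm_pos.ne']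
  have hPsη_one : ∫ η, Psη η ∂ν = 1 := by
    simp_rw [hPsη_eq]; rw [integral_div, hB_eq, div_self hms_pos.ne']
  -- integrability of sqrt products
  have hS_int : Integrable (fun η => Real.sqrt (Pη η) * Real.sqrt (Psη η)) ν := by
    refine Integrable.mono'
      ((hPη_int.add hPsη_int).congr (Filter.Eventually.of_forall fun η => rfl) :
        Integrable (fun η => Pη η + Psη η) ν)
      ((Real.continuous_sqrt.comp_aestronglyMeasurable hPη_int.1).mul
        (Real.continuous_sqrt.comp_aestronglyMeasurable hPsη_int.1))
      (Filter.Eventually.of_forall fun η => ?_)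
    have h1 := Real.sq_sqrt (hPη0 η)
    have h2 := Real.sq_sqrt (hPsη0 η)
    rw [Real.norm_eq_abs, abs_of_nonneg (mul_nonneg (Real.sqrt_nonneg _) (Real.sqrt_nonneg _))]
    nlinarith [sq_nonneg (Real.sqrt (Pη η) - Real.sqrt (Psη η))]
  set I : ℝ := ∫ η, Real.sqrt (Pη η) * Real.sqrt (Psη η) ∂ν with hI
  -- LHS
  have hLHS : ∫ η, (Real.sqrt (Pη η) - Real.sqrt (Psη η)) ^ 2 ∂ν = 2 - 2 * I := by
    have : ∀ η, (Real.sqrt (Pη η) - Real.sqrt (Psη η)) ^ 2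
        = Pη η + Psη η - 2 * (Real.sqrt (Pη η) * Real.sqrt (Psη η)) := by
      intro η
      have h1 := Real.sq_sqrt (hPη0 η)
      have h2 := Real.sq_sqrt (hPsη0 η)
      nlinarith
    simp_rw [this]
    rw [integral_sub
        ((hPη_int.add hPsη_int).congr (Filter.Eventually.of_forall fun η => rfl) :
          Integrable (fun η => Pη η + Psη η) ν) (hS_int.const_mul 2),
      integral_add hPη_int hPsη_int, integral_const_mul, hPη_one, hPsη_one, ← hI]
    ring
  -- numerator of RHS
  have hNum : ∫ η, Pη η * Real.sqrt (R η) ∂ν = Real.sqrt (ms / m) * I := by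
    rw [hI, ← integral_const_mul]
    refine integral_congr_ae (Filter.Eventually.of_forall fun η => ?_)
    show Pη η * Real.sqrt (R η)
      = Real.sqrt (ms / m) * (Real.sqrt (Pη η) * Real.sqrt (Psη η))
    rw [hPη_eq, hPsη_eq, hR_def]
    exact hellinger_aux_sqrt_eq (A η) (B η) m ms (hA0 η) (hB0 η) hm_pos hms_pos
  -- denominator of RHS
  have hDen : ∫ z : H × Ψ × Θ, P z * (prs z.2 / pr z.2) ∂(ν.prod (μΨ.prod μΘ)) = ms / m := by
    have : ∫ z : H × Ψ × Θ, P z * (prs z.2 / pr z.2) ∂(ν.prod (μΨ.prod μΘ))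
        = ∫ z : H × Ψ × Θ, g (z.1, z.2.1) * q (z.1, z.2.2) * prs z.2 / m
            ∂(ν.prod (μΨ.prod μΘ)) := by
      refine integral_congr_ae ?_
      filter_upwards [hpos] with z hz
      rw [hP_def]
      by_cases h : pr z.2 = 0
      · have hgq : g (z.1, z.2.1) * q (z.1, z.2.2) = 0 := by
          by_contra hne
          have : 0 < g (z.1, z.2.1) * q (z.1, z.2.2) :=
            lt_of_le_of_ne (mul_nonneg (hg0 _) (hq0 _)) (Ne.symm hne)
          exact absurd (hz this) (by rw [h]; exact lt_irrefl 0)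
        rw [hgq, h]; ring
      · field_simp
    rw [this, integral_div, ← hms_def]
  have hsqrt_pos : 0 < Real.sqrt (ms / m) := Real.sqrt_pos.2 (div_pos hms_pos hm_pos)
  rw [hLHS, hNum, hDen, mul_div_cancel_left₀ _ hsqrt_pos.ne']
  ring
end

section
/- Theorem 3 (Kullback–Leibler part): if η ↦ P_η(η) log(P_η(η)/P⋆_η(η)) and η ↦ P_η(η) log R(η) are ν-integrable, then KL(P_η‖P⋆_η) = log(∫ P(η,ψ,θ) (π⋆(ψ,θ)/π(ψ,θ)) d(ν ⊗ μ_Ψ ⊗ μ_Θ)) − ∫ P_η(η) log(R(η)) dν(η), where R(η) = [∫ g(η,ψ) q(η,θ) π⋆(ψ,θ) d(μ_Ψ ⊗ μ_Θ)] / [∫ g(η,ψ) q(η,θ) π(ψ,θ) d(μ_Ψ ⊗ μ_Θ)] is the conditional-posterior expectation of the prior ratio π⋆/π given η. -/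
open MeasureTheory

/-- Theorem 3 (Kullback–Leibler part): the KL divergence between the base and alternative
marginal posteriors of the latent variable. -/
theorem lvm_kl_marginal
    {H Ψ Θ : Type*} [MeasurableSpace H] [MeasurableSpace Ψ] [MeasurableSpace Θ]
    (ν : Measure H) (μΨ : Measure Ψ) (μΘ : Measure Θ)
    [SigmaFinite ν] [SigmaFinite μΨ] [SigmaFinite μΘ]
    (g : H × Ψ → ℝ) (q : H × Θ → ℝ) (pr prs : Ψ × Θ → ℝ)
    (hg : Measurable g) (hq : Measurable q) (hpr : Measurable pr) (hprs : Measurable prs)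
    (hg0 : ∀ z, 0 ≤ g z) (hq0 : ∀ z, 0 ≤ q z) (hpr0 : ∀ w, 0 ≤ pr w) (hprs0 : ∀ w, 0 ≤ prs w)
    (m ms : ℝ)
    (hm_def : m = ∫ z : H × Ψ × Θ,
      g (z.1, z.2.1) * q (z.1, z.2.2) * pr z.2 ∂(ν.prod (μΨ.prod μΘ)))
    (hms_def : ms = ∫ z : H × Ψ × Θ,
      g (z.1, z.2.1) * q (z.1, z.2.2) * prs z.2 ∂(ν.prod (μΨ.prod μΘ)))
    (hm_int : Integrable
      (fun z : H × Ψ × Θ => g (z.1, z.2.1) * q (z.1, z.2.2) * pr z.2) (ν.prod (μΨ.prod μΘ)))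
    (hms_int : Integrable
      (fun z : H × Ψ × Θ => g (z.1, z.2.1) * q (z.1, z.2.2) * prs z.2) (ν.prod (μΨ.prod μΘ)))
    (hm_pos : 0 < m) (hms_pos : 0 < ms)
    (hpos : ∀ᵐ z : H × Ψ × Θ ∂(ν.prod (μΨ.prod μΘ)),
      0 < g (z.1, z.2.1) * q (z.1, z.2.2) → 0 < pr z.2)
    (hposs : ∀ᵐ z : H × Ψ × Θ ∂(ν.prod (μΨ.prod μΘ)),
      0 < g (z.1, z.2.1) * q (z.1, z.2.2) → 0 < prs z.2)
    (P Ps : H × Ψ × Θ → ℝ)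
    (hP_def : ∀ z : H × Ψ × Θ, P z = g (z.1, z.2.1) * q (z.1, z.2.2) * pr z.2 / m)
    (hPs_def : ∀ z : H × Ψ × Θ, Ps z = g (z.1, z.2.1) * q (z.1, z.2.2) * prs z.2 / ms)
    (Pη Psη R : H → ℝ)
    (hPη_def : ∀ η, Pη η
      = (∫ w : Ψ × Θ, g (η, w.1) * q (η, w.2) * pr w ∂(μΨ.prod μΘ)) / m)
    (hPsη_def : ∀ η, Psη η
      = (∫ w : Ψ × Θ, g (η, w.1) * q (η, w.2) * prs w ∂(μΨ.prod μΘ)) / ms)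
    (hR_def : ∀ η, R η
      = (∫ w : Ψ × Θ, g (η, w.1) * q (η, w.2) * prs w ∂(μΨ.prod μΘ))
        / ∫ w : Ψ × Θ, g (η, w.1) * q (η, w.2) * pr w ∂(μΨ.prod μΘ))
    (hkl_int : Integrable (fun η => Pη η * Real.log (Pη η / Psη η)) ν)
    (hlr_int : Integrable (fun η => Pη η * Real.log (R η)) ν) :
    ∫ η, Pη η * Real.log (Pη η / Psη η) ∂ν
      = Real.log (∫ z : H × Ψ × Θ, P z * (prs z.2 / pr z.2) ∂(ν.prod (μΨ.prod μΘ)))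
        - ∫ η, Pη η * Real.log (R η) ∂ν := by
  set F : H → ℝ := fun η => ∫ w : Ψ × Θ, g (η, w.1) * q (η, w.2) * pr w ∂(μΨ.prod μΘ) with hF
  set Fs : H → ℝ := fun η => ∫ w : Ψ × Θ, g (η, w.1) * q (η, w.2) * prs w ∂(μΨ.prod μΘ) with hFs
  have hPη' : ∀ η, Pη η = F η / m := fun η => hPη_def η
  have hPsη' : ∀ η, Psη η = Fs η / ms := fun η => hPsη_def η
  have hR' : ∀ η, R η = Fs η / F η := fun η => hR_def η
  have hF0 : ∀ η, 0 ≤ F η := fun η => integral_nonneg fun w =>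
    mul_nonneg (mul_nonneg (hg0 _) (hq0 _)) (hpr0 _)
  have hFs0 : ∀ η, 0 ≤ Fs η := fun η => integral_nonneg fun w =>
    mul_nonneg (mul_nonneg (hg0 _) (hq0 _)) (hprs0 _)
  have hFint : Integrable F ν := hm_int.integral_prod_left
  have hFeq : ∫ η, F η ∂ν = m := by
    rw [hm_def, integral_prod _ hm_int]
  -- the inner integral on the RHS equals ms / m
  have hinner : ∫ z : H × Ψ × Θ, P z * (prs z.2 / pr z.2) ∂(ν.prod (μΨ.prod μΘ)) = ms / m := by
    have hae : (fun z : H × Ψ × Θ => P z * (prs z.2 / pr z.2))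
        =ᵐ[ν.prod (μΨ.prod μΘ)]
        (fun z : H × Ψ × Θ => g (z.1, z.2.1) * q (z.1, z.2.2) * prs z.2 / m) := by
      filter_upwards [hpos] with z hz
      rw [hP_def]
      by_cases h : 0 < g (z.1, z.2.1) * q (z.1, z.2.2)
      · have hprz := hz h
        field_simp
      · have h0 : g (z.1, z.2.1) * q (z.1, z.2.2) = 0 :=
          le_antisymm (not_lt.mp h) (mul_nonneg (hg0 _) (hq0 _))
        rw [h0]
        simp
    rw [integral_congr_ae hae, integral_div, ← hms_def]
  -- a.e. pointwise identity
  have key : ∀ᵐ η ∂ν, Pη η * Real.log (Pη η / Psη η)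
      = Pη η * Real.log (ms / m) - Pη η * Real.log (R η) := by
    filter_upwards [hms_int.prod_right_ae, Measure.ae_ae_of_ae_prod hposs]
      with η hInt hps
    rcases eq_or_lt_of_le (hF0 η) with hF0' | hFpos
    · rw [hPη' η, ← hF0', zero_div, zero_mul, zero_mul, zero_mul, sub_zero]
    · -- F η > 0, show Fs η > 0
      have hFspos : 0 < Fs η := by
        rcases eq_or_lt_of_le (hFs0 η) with h0 | h
        · exfalso
          have hz : (fun w : Ψ × Θ => g (η, w.1) * q (η, w.2) * prs w)
              =ᵐ[μΨ.prod μΘ] 0 :=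
            (integral_eq_zero_iff_of_nonneg
              (fun w => mul_nonneg (mul_nonneg (hg0 _) (hq0 _)) (hprs0 _)) hInt).mp h0.symm
          have hz' : (fun w : Ψ × Θ => g (η, w.1) * q (η, w.2) * pr w)
              =ᵐ[μΨ.prod μΘ] 0 := by
            filter_upwards [hz, hps] with w h1 h2
            by_cases hgq : 0 < g (η, w.1) * q (η, w.2)
            · exact absurd h1 (ne_of_gt (mul_pos hgq (h2 hgq)))
            · have h00 : g (η, w.1) * q (η, w.2) = 0 :=
                le_antisymm (not_lt.mp hgq) (mul_nonneg (hg0 _) (hq0 _))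
              simp [h00]
          have hFz : F η = 0 := (integral_congr_ae hz').trans (integral_zero _ _)
          exact absurd hFz (ne_of_gt hFpos)
        · exact h
      have hFne : F η ≠ 0 := ne_of_gt hFpos
      have hFsne : Fs η ≠ 0 := ne_of_gt hFspos
      have hmne : m ≠ 0 := ne_of_gt hm_pos
      have hmsne : ms ≠ 0 := ne_of_gt hms_pos
      rw [hPη' η, hPsη' η, hR' η,
        Real.log_div (div_ne_zero hFne hmne) (div_ne_zero hFsne hmsne),
        Real.log_div hFne hmne, Real.log_div hFsne hmsne,
        Real.log_div hmsne hmne, Real.log_div hFsne hFne]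
      ring
  -- integrate
  have hPη_int : Integrable Pη ν := by
    apply (hFint.div_const m).congr
    filter_upwards with η
    rw [hPη' η]
  have hPη_one : ∫ η, Pη η ∂ν = 1 := by
    have h1 : ∫ η, Pη η ∂ν = (∫ η, F η ∂ν) / m := by
      rw [← integral_div]
      exact integral_congr_ae (Filter.Eventually.of_forall fun η => hPη' η)
    rw [h1, hFeq, div_self (ne_of_gt hm_pos)]
  rw [integral_congr_ae key, hinner,
    integral_sub (hPη_int.mul_const (Real.log (ms / m))) hlr_int,
    integral_mul_const, hPη_one, one_mul]
end
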